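/- Let δ > 0 and τ > 0. The point (A, ζ₄) = (0, 1 + δ) is an equilibrium of the coupled system (f₁ = f₂ = 0 there), and the Jacobian of (f₁, f₂) at this point is the diagonal matrix diag(−δ/4, −1/τ), whose eigenvalues −δ/4 and −1/τ are both negative; hence the trivial equilibrium is a hyperbolic sink for all δ, τ > 0. -/

import Mathlib

open Matrix

/-- Right-hand side of the slow-flow amplitude equation for the 4-node network. -/
noncomputable def f₁ (A ζ₄ : ℝ) : ℝ :=
  (1 / 4) * ((1 - ζ₄) * A + 5 / 4 * A ^ 3 - 5 / 16 * A ^ 5)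

/-- Right-hand side of the autonomous damping dynamics for the 4-node network. -/
noncomputable def f₂ (δ τ A ζ₄ : ℝ) : ℝ :=
  τ⁻¹ * (-ζ₄ + δ + 1 + 5 / 8 * A ^ 2)

/-- Jacobian matrix of the planar vector field `(f₁, f₂)` with respect to `(A, ζ₄)`. -/
noncomputable def J (δ τ A ζ₄ : ℝ) : Matrix (Fin 2) (Fin 2) ℝ :=
  !![deriv (fun a => f₁ a ζ₄) A, deriv (fun z => f₁ A z) ζ₄;
     deriv (fun a => f₂ δ τ a ζ₄) A, deriv (fun z => f₂ δ τ A z) ζ₄]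

theorem hasDerivAt_f₁_left (A ζ₄ : ℝ) :
    HasDerivAt (fun a => f₁ a ζ₄) ((1 - ζ₄ + 15 / 4 * A ^ 2 - 25 / 16 * A ^ 4) / 4) A := by
  have h := ((((hasDerivAt_id A).const_mul (1 - ζ₄)).add
    (((hasDerivAt_id A).pow 3).const_mul (5 / 4))).sub
    (((hasDerivAt_id A).pow 5).const_mul (5 / 16))).const_mul (1 / 4 : ℝ)
  exact h.congr_deriv (by norm_num; ring)

theorem hasDerivAt_f₁_right (A ζ₄ : ℝ) : HasDerivAt (fun z => f₁ A z) (-A / 4) ζ₄ := by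
  have h := ((((hasDerivAt_id ζ₄).const_sub 1).mul_const A).add_const
    (5 / 4 * A ^ 3 - 5 / 16 * A ^ 5)).const_mul (1 / 4 : ℝ)
  refine (h.congr_deriv (by ring)).congr_of_eventuallyEq (.of_forall fun z => ?_)
  simp only [f₁, id]
  ring

theorem hasDerivAt_f₂_left (δ τ A ζ₄ : ℝ) :
    HasDerivAt (fun a => f₂ δ τ a ζ₄) (5 / 4 * A / τ) A := by
  have h := ((((hasDerivAt_id A).pow 2).const_mul (5 / 8 : ℝ)).const_add
    (-ζ₄ + δ + 1)).const_mul τ⁻¹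
  exact h.congr_deriv (by norm_num; ring)

theorem hasDerivAt_f₂_right (δ τ A ζ₄ : ℝ) : HasDerivAt (fun z => f₂ δ τ A z) (-1 / τ) ζ₄ := by
  have h := ((hasDerivAt_id ζ₄).neg.add_const (δ + 1 + 5 / 8 * A ^ 2)).const_mul τ⁻¹
  refine (h.congr_deriv (by ring)).congr_of_eventuallyEq (.of_forall fun z => ?_)
  simp only [f₂, Pi.neg_apply, id]
  ring

theorem J_eq (δ τ A ζ₄ : ℝ) :
    J δ τ A ζ₄ = !![(1 - ζ₄ + 15 / 4 * A ^ 2 - 25 / 16 * A ^ 4) / 4, -A / 4;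
      5 / 4 * A / τ, -1 / τ] := by
  rw [_root_.J, (hasDerivAt_f₁_left A ζ₄).deriv, (hasDerivAt_f₁_right A ζ₄).deriv,
    (hasDerivAt_f₂_left δ τ A ζ₄).deriv, (hasDerivAt_f₂_right δ τ A ζ₄).deriv]

/-- The trivial equilibrium `(A, ζ₄) = (0, 1 + δ)` of the coupled dynamics has
Jacobian `diag(−δ/4, −1/τ)` with both eigenvalues negative: a hyperbolic sink. -/
theorem stmt_7 (δ τ : ℝ) (hδ : 0 < δ) (hτ : 0 < τ) :
    f₁ 0 (1 + δ) = 0 ∧ f₂ δ τ 0 (1 + δ) = 0 ∧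
    J δ τ 0 (1 + δ) = !![-δ / 4, 0; 0, -1 / τ] ∧
    (-δ / 4 : ℝ) < 0 ∧ (-1 / τ : ℝ) < 0 := by
  refine ⟨by simp [f₁], by simp [f₂], ?_, by linarith, div_neg_of_neg_of_pos (by norm_num) hτ⟩
  simp [J_eq]
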